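/- arXiv:math/0608741 — 7 statements merged into one kernel-verified Lean document; each statement's English description precedes it below -/
import Mathlib

section
/- For any odd integer a > 1, the continued fraction expansion of √(a²+4) is periodic with period (( a−1)/2, 1, 1, (a−1)/2, 2a) and integer part a. -/
/-!
Write `a = 2b + 1` and `s = √(a² + 4)`, so that `a < s < a + 1`. The orbit of `s` under the
Gauss map `x ↦ 1 / (x - ⌊x⌋)` is
`s ↦ (s + a)/4 ↦ (s + a - 2)/a ↦ (s + 2)/a ↦ (s + a - 2)/4 ↦ s + a ↦ (s + a)/4`,
each step being one of the identities `(s - a)(s + a) = 4`, `(s - a + 2)(s + a - 2) = 4a`,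
`(s - 2)(s + 2) = a²`. The partial quotients are the floors `a; b, 1, 1, b, 2a` along this orbit,
and `(s + a)/4` is a periodic point of period `5`.
-/

/-- The sequence of partial quotients of the continued fraction expansion of a real number:
`cfDigit x 0 = ⌊x⌋` and subsequent digits are obtained by iterating the Gauss map. -/
noncomputable def cfDigit (x : ℝ) : ℕ → ℤ
  | 0 => ⌊x⌋
  | n + 1 => cfDigit (x - ⌊x⌋)⁻¹ n

noncomputable def gaussMap (x : ℝ) : ℝ := (x - ⌊x⌋)⁻¹

lemma cfDigit_zero (x : ℝ) : cfDigit x 0 = ⌊x⌋ := rfl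

lemma cfDigit_succ (x : ℝ) (n : ℕ) : cfDigit x (n + 1) = cfDigit (gaussMap x) n := rfl

lemma cfDigit_iterate_gaussMap (x : ℝ) (m n : ℕ) :
    cfDigit (gaussMap^[m] x) n = cfDigit x (m + n) := by
  induction m generalizing x with
  | zero => simp
  | succ m ih => rw [Function.iterate_succ_apply, ih, Nat.add_right_comm, cfDigit_succ]

lemma cfDigit_eq_floor_iterate_gaussMap (x : ℝ) (n : ℕ) : cfDigit x n = ⌊gaussMap^[n] x⌋ :=
  (cfDigit_iterate_gaussMap x n 0).symm

lemma Function.IsPeriodicPt.periodic_cfDigit {x : ℝ} {p : ℕ}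
    (hx : Function.IsPeriodicPt gaussMap p x) : Function.Periodic (cfDigit x) p := fun n => by
  rw [add_comm, ← cfDigit_iterate_gaussMap, hx.eq]

lemma gaussMap_eq_of_floor_eq {x y : ℝ} {k : ℤ} (hk : ⌊x⌋ = k) (h : (x - k) * y = 1) :
    gaussMap x = y := by
  rw [gaussMap, hk]
  exact inv_eq_of_mul_eq_one_right h

lemma sqrt_sq_add_four_mem_Ioo {a : ℝ} (ha : 2 ≤ a) : √(a ^ 2 + 4) ∈ Set.Ioo a (a + 1) := by
  constructor
  · rw [Real.lt_sqrt (by linarith)]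
    linarith
  · rw [Real.sqrt_lt' (by linarith)]
    nlinarith

namespace SqrtSqAddFour

variable {a b : ℤ} {s : ℝ}

lemma floor_add_div_four (hab : a = 2 * b + 1) (hlo : (a : ℝ) < s) (hhi : s < a + 1) :
    ⌊(s + a) / 4⌋ = b := by
  have hab' : (a : ℝ) = 2 * b + 1 := by exact_mod_cast hab
  rw [Int.floor_eq_iff]
  constructor <;> linarith

lemma floor_add_sub_two_div (ha : 3 ≤ a) (hlo : (a : ℝ) < s) (hhi : s < a + 1) :
    ⌊(s + a - 2) / a⌋ = 1 := by
  have ha' : (3 : ℝ) ≤ a := by exact_mod_cast ha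
  rw [Int.floor_eq_iff, Int.cast_one, le_div_iff₀ (by linarith), div_lt_iff₀ (by linarith)]
  constructor <;> linarith

lemma floor_add_two_div (ha : 3 ≤ a) (hlo : (a : ℝ) < s) (hhi : s < a + 1) :
    ⌊(s + 2) / a⌋ = 1 := by
  have ha' : (3 : ℝ) ≤ a := by exact_mod_cast ha
  rw [Int.floor_eq_iff, Int.cast_one, le_div_iff₀ (by linarith), div_lt_iff₀ (by linarith)]
  constructor <;> linarith

lemma floor_add_sub_two_div_four (hab : a = 2 * b + 1) (hlo : (a : ℝ) < s) (hhi : s < a + 1) :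
    ⌊(s + a - 2) / 4⌋ = b := by
  have hab' : (a : ℝ) = 2 * b + 1 := by exact_mod_cast hab
  rw [Int.floor_eq_iff]
  constructor <;> linarith

lemma floor_add (hlo : (a : ℝ) < s) (hhi : s < a + 1) : ⌊s + a⌋ = 2 * a := by
  rw [Int.floor_eq_iff]
  push_cast
  constructor <;> linarith

lemma gaussMap_sqrt (hs : s ^ 2 = a ^ 2 + 4) (hlo : (a : ℝ) < s) (hhi : s < a + 1) :
    gaussMap s = (s + a) / 4 := by
  refine gaussMap_eq_of_floor_eq (Int.floor_eq_iff.2 ⟨hlo.le, hhi⟩) ?_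
  linear_combination hs / 4

lemma gaussMap_add_div_four (hab : a = 2 * b + 1) (hs : s ^ 2 = a ^ 2 + 4) (hlo : (a : ℝ) < s)
    (hhi : s < a + 1) : gaussMap ((s + a) / 4) = (s + a - 2) / a := by
  have ha : (a : ℝ) ≠ 0 := by exact_mod_cast (by omega : a ≠ 0)
  have hb : (b : ℝ) = (a - 1) / 2 := by
    rw [show (a : ℝ) = 2 * b + 1 by exact_mod_cast hab]
    ring
  refine gaussMap_eq_of_floor_eq (floor_add_div_four hab hlo hhi) ?_
  rw [hb]
  field_simp
  linear_combination 2 * hs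

lemma gaussMap_add_sub_two_div (ha : 3 ≤ a) (hs : s ^ 2 = a ^ 2 + 4) (hlo : (a : ℝ) < s)
    (hhi : s < a + 1) : gaussMap ((s + a - 2) / a) = (s + 2) / a := by
  have ha' : (a : ℝ) ≠ 0 := by exact_mod_cast (by omega : a ≠ 0)
  refine gaussMap_eq_of_floor_eq (floor_add_sub_two_div ha hlo hhi) ?_
  field_simp
  linear_combination hs

lemma gaussMap_add_two_div (ha : 3 ≤ a) (hs : s ^ 2 = a ^ 2 + 4) (hlo : (a : ℝ) < s)
    (hhi : s < a + 1) : gaussMap ((s + 2) / a) = (s + a - 2) / 4 := by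
  have ha' : (a : ℝ) ≠ 0 := by exact_mod_cast (by omega : a ≠ 0)
  refine gaussMap_eq_of_floor_eq (floor_add_two_div ha hlo hhi) ?_
  field_simp
  linear_combination hs

lemma gaussMap_add_sub_two_div_four (hab : a = 2 * b + 1) (hs : s ^ 2 = a ^ 2 + 4)
    (hlo : (a : ℝ) < s) (hhi : s < a + 1) : gaussMap ((s + a - 2) / 4) = s + a := by
  have hb : (b : ℝ) = (a - 1) / 2 := by
    rw [show (a : ℝ) = 2 * b + 1 by exact_mod_cast hab]
    ring
  refine gaussMap_eq_of_floor_eq (floor_add_sub_two_div_four hab hlo hhi) ?_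
  rw [hb]
  linear_combination hs / 4

lemma gaussMap_add (hs : s ^ 2 = a ^ 2 + 4) (hlo : (a : ℝ) < s) (hhi : s < a + 1) :
    gaussMap (s + a) = (s + a) / 4 := by
  refine gaussMap_eq_of_floor_eq (floor_add hlo hhi) ?_
  push_cast
  linear_combination hs / 4

lemma isPeriodicPt_gaussMap_add_div_four (hab : a = 2 * b + 1) (hb : 1 ≤ b)
    (hs : s ^ 2 = a ^ 2 + 4) (hlo : (a : ℝ) < s) (hhi : s < a + 1) :
    Function.IsPeriodicPt gaussMap 5 ((s + a) / 4) := by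
  have ha : 3 ≤ a := by omega
  simp only [Function.IsPeriodicPt, Function.IsFixedPt, Function.iterate_succ_apply',
    Function.iterate_zero_apply, gaussMap_add_div_four hab hs hlo hhi,
    gaussMap_add_sub_two_div ha hs hlo hhi, gaussMap_add_two_div ha hs hlo hhi,
    gaussMap_add_sub_two_div_four hab hs hlo hhi, gaussMap_add hs hlo hhi]

end SqrtSqAddFour

open SqrtSqAddFour

/-- For any odd integer `a > 1`, the continued fraction expansion of `√(a²+4)` is
`(a; (a-1)/2, 1, 1, (a-1)/2, 2a)` with the indicated part repeating periodically. -/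
theorem cfrac_sqrt_sq_add_four (a : ℤ) (ha : Odd a) (ha1 : 1 < a) (N : ℤ) (hN : N = a ^ 2 + 4) :
    cfDigit (Real.sqrt N) 0 = a ∧
    ∀ n : ℕ,
      cfDigit (Real.sqrt N) (5 * n + 1) = (a - 1) / 2 ∧
      cfDigit (Real.sqrt N) (5 * n + 2) = 1 ∧
      cfDigit (Real.sqrt N) (5 * n + 3) = 1 ∧
      cfDigit (Real.sqrt N) (5 * n + 4) = (a - 1) / 2 ∧
      cfDigit (Real.sqrt N) (5 * n + 5) = 2 * a := by
  obtain ⟨b, hab⟩ := ha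
  have hb : 1 ≤ b := by omega
  have ha3 : 3 ≤ a := by omega
  rw [show (a - 1) / 2 = b by omega]
  subst hN
  push_cast
  set s := √((a : ℝ) ^ 2 + 4)
  have hs : s ^ 2 = a ^ 2 + 4 := Real.sq_sqrt (by positivity)
  obtain ⟨hlo, hhi⟩ : (a : ℝ) < s ∧ s < a + 1 :=
    sqrt_sq_add_four_mem_Ioo (by exact_mod_cast (by omega : 2 ≤ a))
  have hper := (isPeriodicPt_gaussMap_add_div_four hab hb hs hlo hhi).periodic_cfDigit
  have digit (n k : ℕ) : cfDigit s (5 * n + k + 1) = ⌊gaussMap^[k] ((s + a) / 4)⌋ := by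
    rw [cfDigit_succ, gaussMap_sqrt hs hlo hhi, ← cfDigit_eq_floor_iterate_gaussMap,
      ← hper.nat_mul n k, Nat.cast_id, add_comm k, mul_comm n]
  refine ⟨Int.floor_eq_iff.2 ⟨hlo.le, hhi⟩, fun n => ⟨(digit n 0).trans ?_, (digit n 1).trans ?_,
    (digit n 2).trans ?_, (digit n 3).trans ?_, (digit n 4).trans ?_⟩⟩ <;>
  simp only [Function.iterate_succ_apply', Function.iterate_zero_apply,
    gaussMap_add_div_four hab hs hlo hhi, gaussMap_add_sub_two_div ha3 hs hlo hhi,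
    gaussMap_add_two_div ha3 hs hlo hhi, gaussMap_add_sub_two_div_four hab hs hlo hhi,
    floor_add_div_four hab hlo hhi, floor_add_sub_two_div ha3 hlo hhi,
    floor_add_two_div ha3 hlo hhi, floor_add_sub_two_div_four hab hlo hhi, floor_add hlo hhi]
end

section
/- For N = 4a² + 1 with a odd and a > 3, the real number u = 1/((√N + 1)/4 − ⌊(√N + 1)/4⌋) is greater than 1 and its Galois conjugate (obtained by replacing √N with −√N) lies strictly between −1 and 0. -/
/-!
Write `a = 2m + 1`. Since `(2a)² < N < (2a + 1)²`, the number `√N` lies in `(4m + 2, 4m + 3)`,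
so `(√N + 1)/4` has integer part `m` and fractional part in `(3/4, 1)`, whose inverse exceeds `1`.
The conjugate `(1 - √N)/4 - m` is below `-1/4 - 2m ≤ -1`, so its inverse lies in `(-1, 0)`.
-/

lemma two_mul_lt_sqrt_four_mul_sq_add_one (a : ℝ) : 2 * a < √(4 * a ^ 2 + 1) :=
  Real.lt_sqrt_of_sq_lt (by nlinarith)

lemma sqrt_four_mul_sq_add_one_lt {a : ℝ} (ha : 0 < a) : √(4 * a ^ 2 + 1) < 2 * a + 1 :=
  (Real.sqrt_lt' (by linarith)).mpr (by nlinarith)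

lemma floor_add_one_div_four_eq {s : ℝ} {m : ℤ} (h₁ : 4 * m + 2 < s) (h₂ : s < 4 * m + 3) :
    ⌊(s + 1) / 4⌋ = m :=
  Int.floor_eq_iff.mpr ⟨by linarith, by linarith⟩

lemma neg_one_lt_inv_of_lt_neg_one {x : ℝ} (hx : x < -1) : -1 < x⁻¹ := by
  simpa using (inv_lt_inv_of_neg (by norm_num : (-1 : ℝ) < 0) (by linarith)).mpr hx

/-- For `N = 4a² + 1` with `a` odd and `a > 3`, the number
`u = 1/((√N + 1)/4 − ⌊(√N + 1)/4⌋)` is greater than `1`, and its Galois conjugate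
(obtained by replacing `√N` with `−√N`) lies strictly between `−1` and `0`. -/
theorem gauss_image_gt_one_and_conj_between (a N : ℤ) (ha : Odd a) (ha3 : 3 < a)
    (hN : N = 4 * a ^ 2 + 1) :
    1 < ((Real.sqrt N + 1) / 4 - ⌊(Real.sqrt N + 1) / 4⌋)⁻¹ ∧
    -1 < ((-Real.sqrt N + 1) / 4 - ⌊(Real.sqrt N + 1) / 4⌋)⁻¹ ∧
    ((-Real.sqrt N + 1) / 4 - ⌊(Real.sqrt N + 1) / 4⌋)⁻¹ < 0 := by
  obtain ⟨m, rfl⟩ := ha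
  have hm : (1 : ℝ) ≤ m := by exact_mod_cast (by omega : 1 ≤ m)
  have hN' : (N : ℝ) = 4 * ((2 * m + 1 : ℤ) : ℝ) ^ 2 + 1 := by exact_mod_cast hN
  have hlo := two_mul_lt_sqrt_four_mul_sq_add_one ((2 * m + 1 : ℤ) : ℝ)
  have hhi := sqrt_four_mul_sq_add_one_lt (a := ((2 * m + 1 : ℤ) : ℝ)) (by push_cast; linarith)
  rw [← hN'] at hlo hhi
  push_cast at hlo hhi
  rw [floor_add_one_div_four_eq (m := m) (by linarith) (by linarith)]
  have hconj : (-√N + 1) / 4 - m < -1 := by linarith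
  exact ⟨(one_lt_inv₀ (by linarith)).mpr (by linarith), neg_one_lt_inv_of_lt_neg_one hconj,
    inv_lt_zero.mpr (by linarith)⟩
end

section
/- For a odd with a > 3 and N = 4a² + 1, the number (√N + 1)/4 does not satisfy any equation of the form (√N+1)/4 = (p√N + q)/(r√N + s) with integers p, q, r, s satisfying ps − qr = ±1; equivalently, (√N+1)/4 is not GL₂(ℤ)-equivalent to √N. -/
/-!
Clearing denominators in `(√N + 1)/4 = (p√N + q)/(r√N + s)` and comparing the coefficients of
`1` and of the irrational `√N` gives `r + s = 4p` and `rN + s = 4q`, hence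
`s² − N r² = 4(ps − qr) = ±4`, and the odd determinant forces `r` and `s` to be odd.
But `x² − N y² = ±4` has no solution in odd integers: multiplying `x + y√N` by the unit
`2a − √N` of norm `−1` yields a solution with a smaller odd `|y|`, and `y = ±1` is impossible
because the only square strictly between `(2a − 1)²` and `(2a + 1)²`, where `N ± 4` lies, is even.
-/

lemma Irrational.eq_zero_of_intCast_add_intCast_mul_eq_zero {t : ℝ} (ht : Irrational t)
    {m n : ℤ} (h : m + n * t = 0) : m = 0 ∧ n = 0 := by
  by_cases hn : n = 0
  · subst hn
    exact ⟨by simpa using h, rfl⟩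
  · exact absurd h ((ht.intCast_mul hn).intCast_add m).ne_zero

lemma Irrational.coeffs_of_add_one_div_eq_div {t : ℝ} (ht : Irrational t) {N c p q r s : ℤ}
    (htN : t ^ 2 = N) (hc : c ≠ 0) (h : (t + 1) / c = (p * t + q) / (r * t + s)) :
    r + s = c * p ∧ r * N + s = c * q := by
  have hden : (r : ℝ) * t + s ≠ 0 := by
    intro h0
    rw [h0, div_zero, div_eq_zero_iff] at h
    rcases h with h | h
    · exact ht.ne_int (-1) (by push_cast; linarith)
    · exact hc (by exact_mod_cast h)
  rw [div_eq_div_iff (by exact_mod_cast hc) hden] at h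
  have hlin : ((r * N + s - c * q : ℤ) : ℝ) + ((r + s - c * p : ℤ) : ℝ) * t = 0 := by
    push_cast
    linear_combination h - (r : ℝ) * htN
  obtain ⟨h₁, h₂⟩ := ht.eq_zero_of_intCast_add_intCast_mul_eq_zero hlin
  exact ⟨by linarith, by linarith⟩

lemma Int.not_isSquare_four_mul_sq_add_one {a : ℤ} (ha : a ≠ 0) : ¬IsSquare (4 * a ^ 2 + 1) := by
  rintro ⟨r, hr⟩
  have ha' := abs_pos.2 ha
  have hlo : (2 * |a|) ^ 2 < |r| ^ 2 := by simp only [mul_pow, sq_abs]; nlinarith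
  have hhi : |r| ^ 2 < (2 * |a| + 1) ^ 2 := by
    have : |r| ^ 2 = 4 * |a| ^ 2 + 1 := by simp only [sq_abs]; linarith
    nlinarith
  have := lt_of_pow_lt_pow_left₀ 2 (abs_nonneg r) hlo
  have := lt_of_pow_lt_pow_left₀ 2 (by positivity) hhi
  omega

lemma Int.odd_and_odd_of_even_add_of_odd_sub_mul {p q r s : ℤ} (hrs : Even (r + s))
    (hdet : Odd (p * s - q * r)) : Odd r ∧ Odd s := by
  rw [Int.even_add] at hrs
  have hr : Odd r := by
    rw [← Int.not_even_iff_odd] at hdet ⊢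
    intro hr
    exact hdet (((hrs.1 hr).mul_left p).sub (hr.mul_left q))
  exact ⟨hr, Int.not_even_iff_odd.1 fun hs => Int.not_even_iff_odd.2 hr (hrs.2 hs)⟩

/-- Multiplication of `x + y√N`, `N = 4a² + 1`, by the unit `2a − √N` of norm `−1`. -/
lemma norm_mul_unit_eq_neg (a x y : ℤ) :
    (2 * a * x - (4 * a ^ 2 + 1) * y) ^ 2 - (4 * a ^ 2 + 1) * (x - 2 * a * y) ^ 2 =
      -(x ^ 2 - (4 * a ^ 2 + 1) * y ^ 2) := by
  ring

section Descent

variable {a : ℤ}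

lemma four_mul_le_abs_sq_sub_four_mul_sq_add_one (ha : 0 < a) {x : ℤ} (hx : Odd x) :
    4 * a ≤ |x ^ 2 - (4 * a ^ 2 + 1)| := by
  rw [← sq_abs x]
  obtain h | h : 2 * a + 1 ≤ |x| ∨ |x| ≤ 2 * a - 1 := by
    obtain ⟨k, hk⟩ := odd_abs.2 hx
    omega
  · exact le_abs.2 (Or.inl (by nlinarith))
  · exact le_abs.2 (Or.inr (by nlinarith [abs_nonneg x]))

lemma abs_sub_two_mul_mul_mem_Ioo (ha : 0 < a) {x y : ℤ} (hy : 3 ≤ y)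
    (h : |x ^ 2 - (4 * a ^ 2 + 1) * y ^ 2| = 4) :
    |x| - 2 * a * y ∈ Set.Ioo 0 y := by
  rw [← sq_abs x] at h
  obtain ⟨hlo, hhi⟩ := abs_le.1 h.le
  constructor
  · have : (2 * a * y) ^ 2 < |x| ^ 2 := by nlinarith
    linarith [lt_of_pow_lt_pow_left₀ 2 (abs_nonneg x) this]
  · have : |x| ^ 2 < ((2 * a + 1) * y) ^ 2 := by nlinarith
    linarith [lt_of_pow_lt_pow_left₀ 2 (by positivity) this]

theorem abs_sq_sub_four_mul_sq_add_one_mul_sq_ne_four (ha : 2 ≤ a) {x y : ℤ} (hx : Odd x)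
    (hy : Odd y) : |x ^ 2 - (4 * a ^ 2 + 1) * y ^ 2| ≠ 4 := by
  suffices ∀ n : ℕ, ∀ x : ℤ, Odd x → Odd (n : ℤ) → |x ^ 2 - (4 * a ^ 2 + 1) * n ^ 2| ≠ 4 by
    simpa only [Int.natCast_natAbs, sq_abs] using
      this y.natAbs x hx (by rwa [Int.natCast_natAbs, odd_abs])
  intro n
  induction n using Nat.strong_induction_on with
  | _ n ih =>
  intro x hx hn h
  obtain rfl | hn3 : n = 1 ∨ 3 ≤ n := by
    obtain ⟨k, hk⟩ := hn
    omega
  · have := four_mul_le_abs_sq_sub_four_mul_sq_add_one (a := a) (by omega) hx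
    simp only [Nat.cast_one, one_pow, mul_one] at h
    omega
  · obtain ⟨hpos, hlt⟩ := abs_sub_two_mul_mul_mem_Ioo (by omega) (by exact_mod_cast hn3) h
    have hcast : ((|x| - 2 * a * n).toNat : ℤ) = |x| - 2 * a * n := Int.toNat_of_nonneg hpos.le
    refine ih (|x| - 2 * a * n).toNat (by omega) (2 * a * |x| - (4 * a ^ 2 + 1) * n) ?_ ?_ ?_
    · exact Even.sub_odd ⟨a * |x|, by ring⟩ (Odd.mul ⟨2 * a ^ 2, by ring⟩ hn)
    · rw [hcast]
      exact (odd_abs.2 hx).sub_even ⟨a * n, by ring⟩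
    · rw [hcast, norm_mul_unit_eq_neg, abs_neg, sq_abs]
      exact h

end Descent

theorem not_equivalent_sqrt_general (a N : ℤ) (ha3 : 3 < a) (hN : N = 4 * a ^ 2 + 1) :
    ¬ ∃ p q r s : ℤ, (p * s - q * r = 1 ∨ p * s - q * r = -1) ∧
      (Real.sqrt N + 1) / 4 = (p * Real.sqrt N + q) / (r * Real.sqrt N + s) := by
  rintro ⟨p, q, r, s, hdet, heq⟩
  have hN0 : 0 ≤ N := by rw [hN]; positivity
  have hirr : Irrational √N := (irrational_sqrt_intCast_iff_of_nonneg hN0).2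
    (hN ▸ Int.not_isSquare_four_mul_sq_add_one (by omega))
  obtain ⟨h₁, h₂⟩ := hirr.coeffs_of_add_one_div_eq_div (c := 4)
    (Real.sq_sqrt (by exact_mod_cast hN0)) four_ne_zero (by exact_mod_cast heq)
  have hnorm : s ^ 2 - N * r ^ 2 = 4 * (p * s - q * r) := by
    linear_combination s * h₁ - r * h₂
  have hdet_odd : Odd (p * s - q * r) := by rcases hdet with h | h <;> simp [h]
  obtain ⟨hr, hs⟩ := Int.odd_and_odd_of_even_add_of_odd_sub_mul ⟨2 * p, by omega⟩ hdet_odd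
  refine abs_sq_sub_four_mul_sq_add_one_mul_sq_ne_four (a := a) (by omega) hs hr ?_
  rw [← hN, hnorm, abs_mul]
  rcases hdet with h | h <;> simp [h]

/-- For `a` odd with `a > 3` and `N = 4a² + 1`, the number `(√N + 1)/4` is not
`GL₂(ℤ)`-equivalent to `√N`: there are no integers `p, q, r, s` with `ps − qr = ±1` and
`(√N + 1)/4 = (p√N + q)/(r√N + s)`. -/
theorem not_equivalent_sqrt (a N : ℤ) (ha : Odd a) (ha3 : 3 < a) (hN : N = 4 * a ^ 2 + 1) :
    ¬ ∃ p q r s : ℤ, (p * s - q * r = 1 ∨ p * s - q * r = -1) ∧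
      (Real.sqrt N + 1) / 4 = (p * Real.sqrt N + q) / (r * Real.sqrt N + s) :=
  not_equivalent_sqrt_general a N ha3 hN
end

section
/- Let N ≡ 5 (mod 8) be square-free. In the order A = ℤ[√N], the ideal I₊ = (4, √N + 1) satisfies I₊² = 2·(4, √N − 1) (as ideals generated by the indicated elements); consequently the class of I₊ in the ideal class group of A has order 1 or 3. -/
/-!
Write `s = √N`, so `s² = 8k + 5`, and `I± = (4, s ± 1)`. Multiplying out generators,
`I₊ I₋ = (16, 4(s - 1), 4(s + 1), s² - 1) = (4)` since `s² - 1 = 8k + 4`, and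
`I₊² = (16, 4(s + 1), (s + 1)²) = (8, 2(s - 1)) = (2) I₋` since `(s + 1)² = 2(s - 1) + 8(k + 1)`.
Hence `I₊³ = (2) I₋ I₊ = (8)`.
-/

open Pointwise Ideal

theorem Ideal.span_singleton_mul_span_pair {R : Type*} [CommRing R] (a b c : R) :
    span {a} * span {b, c} = span {a * b, a * c} := by
  rw [span_mul_span', Set.singleton_mul, Set.image_pair]

section

variable {R : Type*} [CommRing R] {s k : R}

theorem span_four_add_one_mul_span_four_sub_one (hs : s ^ 2 = 8 * k + 5) :
    span {4, s + 1} * span {4, s - 1} = span {(4 : R)} := by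
  rw [span_pair_mul_span_pair]
  apply le_antisymm
  · simp only [span_le, Set.insert_subset_iff, Set.singleton_subset_iff, SetLike.mem_coe,
      mem_span_singleton]
    refine ⟨⟨4, rfl⟩, ⟨s - 1, rfl⟩, ⟨s + 1, mul_comm _ _⟩, ⟨2 * k + 1, ?_⟩⟩
    linear_combination hs
  · rw [span_singleton_le_iff_mem]
    have h4 : (s + 1) * (s - 1) + k * (4 * (s - 1)) - k * ((s + 1) * 4) = (4 : R) := by
      linear_combination hs
    have h4_mem : (s + 1) * (s - 1) + k * (4 * (s - 1)) - k * ((s + 1) * 4) ∈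
        span {4 * 4, 4 * (s - 1), (s + 1) * 4, (s + 1) * (s - 1)} := by
      refine sub_mem (add_mem ?_ (mul_mem_left _ _ ?_)) (mul_mem_left _ _ ?_) <;>
        exact subset_span (by simp)
    rwa [h4] at h4_mem

theorem span_four_add_one_sq (hs : s ^ 2 = 8 * k + 5) :
    span {4, s + 1} ^ 2 = span {2} * span {4, s - 1} := by
  rw [sq, span_pair_mul_span_pair, span_singleton_mul_span_pair]
  apply le_antisymm
  · simp only [span_le, Set.insert_subset_iff, Set.singleton_subset_iff, SetLike.mem_coe,
      mem_span_pair]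
    refine ⟨⟨2, 0, by ring⟩, ⟨1, 2, by ring⟩, ⟨1, 2, by ring⟩, ⟨k + 1, 1, ?_⟩⟩
    linear_combination -hs
  · simp only [span_le, Set.insert_subset_iff, Set.singleton_subset_iff, SetLike.mem_coe]
    have h8 : 2 * ((s + 1) * (s + 1)) - 4 * (s + 1) - k * (4 * 4) = (2 * 4 : R) := by
      linear_combination 2 * hs
    have h2 : (2 * (s - 1) : R) = (s + 1) * (s + 1) - (k + 1) * (2 * 4) := by
      linear_combination -hs
    have h8_mem : (2 * 4 : R) ∈ span {4 * 4, 4 * (s + 1), (s + 1) * 4, (s + 1) * (s + 1)} := by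
      rw [← h8]
      refine sub_mem (sub_mem (mul_mem_left _ _ ?_) ?_) (mul_mem_left _ _ ?_) <;>
        exact subset_span (by simp)
    refine ⟨h8_mem, ?_⟩
    rw [h2]
    exact sub_mem (subset_span (by simp)) (mul_mem_left _ _ h8_mem)

theorem span_four_add_one_pow_three (hs : s ^ 2 = 8 * k + 5) :
    span {4, s + 1} ^ 3 = span {(8 : R)} := by
  rw [pow_succ, span_four_add_one_sq hs, mul_assoc, mul_comm (span {4, s - 1}),
    span_four_add_one_mul_span_four_sub_one hs, span_singleton_mul_span_singleton]
  norm_num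

end

theorem ideal_sq_eq_two_mul_conj_general (N : ℕ) (hN : N % 8 = 5) :
    (Ideal.span {4, Zsqrtd.sqrtd + 1} : Ideal (Zsqrtd N)) ^ 2 =
        Ideal.span {2} * Ideal.span {4, Zsqrtd.sqrtd - 1} ∧
      ((Ideal.span {4, Zsqrtd.sqrtd + 1} : Ideal (Zsqrtd N)) ^ 3).IsPrincipal := by
  have hs : (Zsqrtd.sqrtd : Zsqrtd N) ^ 2 = 8 * ((N / 8 : ℕ) : Zsqrtd N) + 5 := by
    rw [sq, Zsqrtd.dmuld]
    rw [Int.cast_natCast]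
    exact_mod_cast (by omega : N = 8 * (N / 8) + 5)
  exact ⟨span_four_add_one_sq hs, ⟨8, span_four_add_one_pow_three hs⟩⟩

/-- For squarefree `N ≡ 5 (mod 8)`, in the order `A = ℤ[√N]` (modelled as `Zsqrtd N`) the
ideal `I₊ = (4, √N + 1)` satisfies `I₊² = (2)·(4, √N − 1)`; consequently `I₊³` is a
principal ideal, so the class of `I₊` in the class group of `A` has order `1` or `3`. -/
theorem ideal_sq_eq_two_mul_conj (N : ℕ) (hsf : Squarefree N) (hN : N % 8 = 5) :
    (Ideal.span {4, Zsqrtd.sqrtd + 1} : Ideal (Zsqrtd N)) ^ 2 =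
        Ideal.span {2} * Ideal.span {4, Zsqrtd.sqrtd - 1} ∧
      ((Ideal.span {4, Zsqrtd.sqrtd + 1} : Ideal (Zsqrtd N)) ^ 3).IsPrincipal :=
  ideal_sq_eq_two_mul_conj_general N hN
end

section
/- Let N ≡ 5 (mod 8) be square-free. The ideals I± = (4, √N ± 1) of ℤ[√N] are principal if and only if the equation x² − N y² = ±4 has a solution in odd integers x, y. -/
/-!
On `ℤ[√d]` with `d ≡ 1 (mod 4)`, the ideal `I₊ = (4, √d + 1)` is `{a + b√d : a ≡ b (mod 4)}`,
and `I₋ = (4, √d - 1)` is its conjugate. Any `β ∈ I₊` times the conjugate of any `α ∈ I₊` lies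
in `4 ℤ[√d]`, so an element `α ∈ I₊` of norm `±4` generates `I₊`. Conversely a generator `α` of
`I₊` has norm dividing `N(4) = 16` and `N(√d + 1) = 1 - d`, hence dividing `4` when
`d ≡ 5 (mod 8)`, while `N(α) = α ᾱ ∈ I₊ ∩ ℤ = 4ℤ`; so `N(α) = ±4`. Finally, for
`x ≡ y (mod 4)` and `d ≡ 5 (mod 8)` one has `x² - d y² ≡ 4y (mod 8)`, which forces `x, y` odd.
-/

namespace Zsqrtd

variable {d : ℤ}

theorem norm_mk (x y : ℤ) : (⟨x, y⟩ : ℤ√d).norm = x ^ 2 - d * y ^ 2 := by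
  rw [norm_def]; ring

theorem mem_span_four_sqrtd_add_one_iff (hd : d % 4 = 1) {a : ℤ√d} :
    a ∈ Ideal.span {4, sqrtd + 1} ↔ 4 ∣ a.re - a.im := by
  rw [Ideal.mem_span_pair]
  constructor
  · rintro ⟨u, v, rfl⟩
    obtain ⟨m, hm⟩ : 4 ∣ d - 1 := by omega
    refine ⟨u.re - u.im + m * v.im, ?_⟩
    simp only [re_add, im_add, re_mul, im_mul, re_ofNat, im_ofNat, re_sqrtd, im_sqrtd, re_one,
      im_one]
    linear_combination v.im * hm
  · rintro ⟨k, hk⟩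
    exact ⟨k, a.im, by ext <;> simp; linarith⟩

theorem map_star_span_four_sqrtd_add_one :
    Ideal.map (starRingEnd (ℤ√d)) (Ideal.span {4, sqrtd + 1}) = Ideal.span {4, sqrtd - 1} := by
  have : starRingEnd (ℤ√d) (sqrtd + 1) = -(sqrtd - 1) := by ext <;> simp [starRingEnd_apply]
  rw [Ideal.map_span, Set.image_pair, map_ofNat, this, Ideal.span_insert, Ideal.span_singleton_neg,
    ← Ideal.span_insert]

theorem four_dvd_mul_star_of_mem (hd : d % 4 = 1) {a b : ℤ√d}
    (ha : a ∈ Ideal.span {4, sqrtd + 1}) (hb : b ∈ Ideal.span {4, sqrtd + 1}) :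
    (4 : ℤ√d) ∣ a * star b := by
  rw [mem_span_four_sqrtd_add_one_iff hd] at ha hb
  obtain ⟨k, hk⟩ := ha
  obtain ⟨l, hl⟩ := hb
  obtain ⟨m, hm⟩ : 4 ∣ d - 1 := by omega
  rw [show (4 : ℤ√d) = ((4 : ℤ) : ℤ√d) by norm_num, intCast_dvd]
  simp only [re_mul, im_mul, re_star, im_star]
  constructor
  · exact ⟨k * b.re + a.im * l - m * a.im * b.im,
      by linear_combination b.re * hk + a.im * hl - a.im * b.im * hm⟩
  · exact ⟨a.im * l - k * b.im, by linear_combination -b.im * hk + a.im * hl⟩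

theorem span_four_sqrtd_add_one_eq_span_singleton (hd : d % 4 = 1) {α : ℤ√d}
    (hα : α ∈ Ideal.span {4, sqrtd + 1}) (hn : α.norm.natAbs = 4) :
    Ideal.span {4, sqrtd + 1} = Ideal.span {α} := by
  refine _root_.le_antisymm (fun β hβ => ?_) (Ideal.span_singleton_le_iff_mem _ |>.2 hα)
  obtain ⟨u, hu⟩ : Associated α.norm 4 := Int.associated_iff_natAbs.2 hn
  obtain ⟨γ, hγ⟩ := four_dvd_mul_star_of_mem hd hβ hα
  have h4 : ((4 : ℤ) : ℤ√d) * β = ((4 : ℤ) : ℤ√d) * (α * (u * γ)) := by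
    have := congrArg (fun z : ℤ => (z : ℤ√d)) hu
    simp only [Int.cast_mul, norm_eq_mul_conj] at this
    push_cast at this ⊢
    linear_combination (-β) * this + (α * u) * hγ
  rw [Zsqrtd.eq_of_smul_eq_smul_left (by norm_num) h4]
  exact Ideal.mem_span_singleton.2 (dvd_mul_right _ _)

theorem natAbs_norm_eq_four_of_span_eq (hd : d % 8 = 5) {α : ℤ√d}
    (h : Ideal.span {4, sqrtd + 1} = Ideal.span {α}) : α.norm.natAbs = 4 := by
  have hdvd : ∀ β ∈ ({4, sqrtd + 1} : Set (ℤ√d)), α ∣ β := fun β hβ =>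
    Ideal.mem_span_singleton.1 (h ▸ Ideal.subset_span hβ)
  have h16 : α.norm ∣ 16 := by
    have := map_dvd normMonoidHom (hdvd 4 (by simp))
    simpa [normMonoidHom, norm_def] using this
  have h1d : α.norm ∣ 1 - d := by
    have := map_dvd normMonoidHom (hdvd (sqrtd + 1) (by simp))
    simpa [normMonoidHom, norm_def] using this
  have h4 : 4 ∣ α.norm := by
    have : (α.norm : ℤ√d) ∈ Ideal.span {4, sqrtd + 1} :=
      h ▸ norm_eq_mul_conj α ▸ Ideal.mul_mem_right _ _ (Ideal.mem_span_singleton_self α)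
    simpa using (mem_span_four_sqrtd_add_one_iff (by omega)).1 this
  obtain ⟨m, hm⟩ : 8 ∣ d - 5 := by omega
  -- `1 - d = -4 (2m + 1)` and `(2m + 1)² ≡ 1 (mod 16)`, whence a Bézout relation for `4`
  have : α.norm ∣ 4 := by
    have bezout : (4 : ℤ) = -(m ^ 2 + m) * 16 + -(2 * m + 1) * (1 - d) := by
      linear_combination -(2 * m + 1) * hm
    exact bezout ▸ h16.linear_comb h1d _ _
  simpa using Int.natAbs_eq_of_dvd_dvd this h4

theorem odd_re_and_odd_im (hd : d % 8 = 5) {α : ℤ√d} (h4 : 4 ∣ α.re - α.im)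
    (hn : α.norm.natAbs = 4) : Odd α.re ∧ Odd α.im := by
  obtain ⟨k, hk⟩ := h4
  obtain ⟨m, hm⟩ : 8 ∣ d - 5 := by omega
  obtain ⟨t, ht⟩ := Int.even_mul_succ_self α.im
  have hmod : α.norm = 4 * α.im + 8 * (k * α.im + 2 * k ^ 2 - m * α.im ^ 2 - t) := by
    rw [norm_def]
    linear_combination (α.re + α.im + 4 * k) * hk - α.im ^ 2 * hm - 4 * ht
  rw [Int.odd_iff, Int.odd_iff]
  rcases Int.natAbs_eq_iff.1 hn with h | h <;> omega

end Zsqrtd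

theorem ideals_principal_iff_odd_solution_general (N : ℕ) (hN : N % 8 = 5) :
    ((Ideal.span {4, Zsqrtd.sqrtd + 1} : Ideal (Zsqrtd N)).IsPrincipal ∧
        (Ideal.span {4, Zsqrtd.sqrtd - 1} : Ideal (Zsqrtd N)).IsPrincipal) ↔
      ∃ x y : ℤ, Odd x ∧ Odd y ∧
        (x ^ 2 - (N : ℤ) * y ^ 2 = 4 ∨ x ^ 2 - (N : ℤ) * y ^ 2 = -4) := by
  have h8 : (N : ℤ) % 8 = 5 := by omega
  have h4 : (N : ℤ) % 4 = 1 := by omega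
  simp_rw [← Zsqrtd.norm_mk (d := N),
    show ∀ a : ℤ, (a = 4 ∨ a = -4) ↔ a.natAbs = 4 from fun a => by omega]
  constructor
  · rintro ⟨⟨α, hα⟩, -⟩
    rw [Ideal.submodule_span_eq] at hα
    have hmem := (Zsqrtd.mem_span_four_sqrtd_add_one_iff h4).1
      (hα ▸ Ideal.mem_span_singleton_self α)
    have hn := Zsqrtd.natAbs_norm_eq_four_of_span_eq h8 hα
    obtain ⟨hre, him⟩ := Zsqrtd.odd_re_and_odd_im h8 hmem hn
    exact ⟨α.re, α.im, hre, him, hn⟩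
  · rintro ⟨x, y, hx, hy, hn⟩
    wlog hxy : 4 ∣ x - y generalizing y
    · refine this (-y) hy.neg (by simpa [Zsqrtd.norm_mk] using hn) ?_
      rw [Int.odd_iff] at hx hy
      omega
    have hI := Zsqrtd.span_four_sqrtd_add_one_eq_span_singleton h4
      ((Zsqrtd.mem_span_four_sqrtd_add_one_iff h4).2 hxy) hn
    have hprin : (Ideal.span {4, Zsqrtd.sqrtd + 1} : Ideal (Zsqrtd N)).IsPrincipal := ⟨⟨_, hI⟩⟩
    exact ⟨hprin, Zsqrtd.map_star_span_four_sqrtd_add_one ▸ hprin.map_ringHom _⟩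

/-- For squarefree `N ≡ 5 (mod 8)`, the ideals `I± = (4, √N ± 1)` of `ℤ[√N]` (modelled as
`Zsqrtd N`) are principal if and only if `x² − Ny² = ±4` has a solution in odd integers. -/
theorem ideals_principal_iff_odd_solution (N : ℕ) (hsf : Squarefree N) (hN : N % 8 = 5) :
    ((Ideal.span {4, Zsqrtd.sqrtd + 1} : Ideal (Zsqrtd N)).IsPrincipal ∧
        (Ideal.span {4, Zsqrtd.sqrtd - 1} : Ideal (Zsqrtd N)).IsPrincipal) ↔
      ∃ x y : ℤ, Odd x ∧ Odd y ∧
        (x ^ 2 - (N : ℤ) * y ^ 2 = 4 ∨ x ^ 2 - (N : ℤ) * y ^ 2 = -4) :=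
  ideals_principal_iff_odd_solution_general N hN
end

section
/- For every odd integer a > 3 such that N = 4a² + 1 is square-free, the fundamental unit ε of the ring of integers of ℚ(√N) lies in ℤ[√N] (i.e., e = 1); equivalently, x² − N y² = ±4 has no solution in odd integers. -/
/-- `z : ℝ` belongs to the maximal order `ℤ[(1+√N)/2]` of `ℚ(√N)` (for `N ≡ 1 mod 4`):
it can be written `(x + y√N)/2` with `x ≡ y (mod 2)`. -/
def InMaxOrder (N : ℕ) (z : ℝ) : Prop :=
  ∃ x y : ℤ, x % 2 = y % 2 ∧ z = (x + y * Real.sqrt N) / 2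

/-- `z : ℝ` belongs to the subring `ℤ[√N]`. -/
def InZsqrt (N : ℕ) (z : ℝ) : Prop :=
  ∃ x y : ℤ, z = x + y * Real.sqrt N

/-- `ε` is the fundamental unit of the maximal order of `ℚ(√N)`: it is the smallest
unit of the maximal order that is greater than `1`. -/
def IsFundamentalUnit (N : ℕ) (ε : ℝ) : Prop :=
  1 < ε ∧ InMaxOrder N ε ∧ InMaxOrder N ε⁻¹ ∧
    ∀ η : ℝ, 1 < η → InMaxOrder N η → InMaxOrder N η⁻¹ → ε ≤ η

lemma sq_odd_int (w : ℤ) (hw : Odd w) : ∃ j, w ^ 2 = 8 * j + 1 := by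
  obtain ⟨k, rfl⟩ := hw
  obtain ⟨j, hj⟩ := Int.even_mul_succ_self k
  exact ⟨j, by linear_combination 4 * hj⟩


lemma coeffs_zero {s : ℝ} (hirr : Irrational s) {p q : ℤ}
    (h : (p : ℝ) + q * s = 0) : p = 0 ∧ q = 0 := by
  by_cases hq : q = 0
  · subst hq
    push_cast at h
    have : (p : ℝ) = 0 := by linarith
    exact ⟨by exact_mod_cast this, rfl⟩
  · exfalso
    apply hirr
    refine ⟨(-p : ℚ) / (q : ℚ), ?_⟩
    have hq' : (q : ℝ) ≠ 0 := Int.cast_ne_zero.mpr hq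
    push_cast
    field_simp
    linarith

lemma aux_sqrt_gt {A s NR : ℝ} (hA : 0 ≤ A) (hs : 0 ≤ s) (hss : s * s = NR)
    (hNR : NR = 4 * A ^ 2 + 1) : 2 * A < s := by nlinarith

lemma aux_conj_bound {η c : ℝ} (hη : 1 < η) (h : η * c = 1 ∨ η * c = -1) :
    -1 < c ∧ c < 1 := by
  rcases h with h | h <;> constructor <;> nlinarith

lemma aux_sq_lt {X s NR : ℝ} (h0 : 0 ≤ X) (h1 : X < s) (h2 : s * s = NR) :
    X ^ 2 < NR := by nlinarith

lemma aux_small_contra {X N m : ℤ} (hX2 : X ^ 2 < N) (hN : 101 ≤ N) (hm : 3 ≤ m)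
    (h : X ^ 2 - N * m ^ 2 = 4 ∨ X ^ 2 - N * m ^ 2 = -4) : False := by
  have hm9 : 9 ≤ m * m := by nlinarith
  rcases h with h | h <;> nlinarith

lemma aux_y1_contra {a b : ℤ} (ha5 : 5 ≤ a) (hb0 : 0 ≤ b)
    (h : (2*b+1) ^ 2 - (4*a^2+1) * 1 ^ 2 = 4 ∨ (2*b+1) ^ 2 - (4*a^2+1) * 1 ^ 2 = -4) :
    False := by
  rcases h with h | h
  · have h1 : b < a := by nlinarith
    have h2 : a ≤ b := by nlinarith
    linarith
  · have h1 : b < a := by nlinarith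
    have h2 : a ≤ b := by nlinarith
    linarith

lemma aux_eta'_gt {η s A θ : ℝ} (hinv : (s - 2*A) * θ = 1) (hηθ : θ < η)
    (hspos : 0 < s - 2*A) : 1 < η * (s - 2*A) := by nlinarith

lemma aux_c'_bound {η c θ : ℝ} (hec : η * c = 1 ∨ η * c = -1) (hθpos : 0 < θ)
    (hηθ : θ < η) (hηpos : 0 < η) : -1 < -c * θ ∧ -c * θ < 1 := by
  rcases hec with h | h <;> constructor <;> nlinarith

lemma aux_pos_of_mul {y s : ℝ} (h : 0 < y * s) (hs : 0 < s) : 0 < y := by nlinarith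

lemma aux_h20 {s A θ : ℝ} (hinv : (s - 2*A) * θ = 1) (hθ20 : 20 < θ)
    (hspos : 0 < s - 2*A) : 20 * (s - 2*A) < 1 := by nlinarith

lemma aux_step {η s A : ℝ} (h20 : 20 * (s - 2*A) < 1) (hη20 : 20 < η)
    (hspos : 0 < s - 2*A) : η * (s - 2*A) + 1 < η - 1 := by nlinarith

lemma no_odd_solution (a : ℤ) (ha : Odd a) (ha3 : 3 < a)
    (N : ℕ) (hN : (N : ℤ) = 4 * a ^ 2 + 1) (hirr : Irrational (Real.sqrt N)) :
    ¬ ∃ x y : ℤ, Odd x ∧ Odd y ∧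
        (x ^ 2 - (N : ℤ) * y ^ 2 = 4 ∨ x ^ 2 - (N : ℤ) * y ^ 2 = -4) := by
  rintro ⟨x, y, hx, hy, heq⟩
  have ha5 : 5 ≤ a := by obtain ⟨k, hk⟩ := ha; omega
  set s : ℝ := Real.sqrt N with hs_def
  have hN0 : (0:ℝ) ≤ (N:ℝ) := by positivity
  have hss : s * s = (N:ℝ) := Real.mul_self_sqrt hN0
  have hNr : (N:ℝ) = 4 * (a:ℝ) ^ 2 + 1 := by exact_mod_cast hN
  have hs_nonneg : 0 ≤ s := Real.sqrt_nonneg _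
  have haR : (5:ℝ) ≤ (a:ℝ) := by exact_mod_cast ha5
  have hs_gt : 2 * (a:ℝ) < s := aux_sqrt_gt (by linarith) hs_nonneg hss hNr
  have hNZ : (101:ℤ) ≤ (N:ℤ) := by
    have h25 : 25 ≤ a ^ 2 := by nlinarith
    rw [hN]; linarith
  have main : ∀ m X : ℕ, Odd m → Odd X →
      ((X:ℤ) ^ 2 - (N:ℤ) * (m:ℤ) ^ 2 = 4 ∨ (X:ℤ) ^ 2 - (N:ℤ) * (m:ℤ) ^ 2 = -4) → False := by
    intro m
    induction m using Nat.strong_induction_on with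
    | _ m IH =>
    intro X hm_odd hX_odd hXeq
    have hm1 : 1 ≤ m := hm_odd.pos
    have hX1 : 1 ≤ X := hX_odd.pos
    have hm1R : (1:ℝ) ≤ (m:ℝ) := by exact_mod_cast hm1
    have hX1R : (1:ℝ) ≤ (X:ℝ) := by exact_mod_cast hX1
    set η : ℝ := ((X:ℝ) + (m:ℝ) * s) / 2 with hη_def
    set c : ℝ := ((X:ℝ) - (m:ℝ) * s) / 2 with hc_def
    have hkey : 4 * (η * c) = (X:ℝ) ^ 2 - (N:ℝ) * (m:ℝ) ^ 2 := by
      have h4 : 4 * (η * c) = (X:ℝ) ^ 2 - (m:ℝ) ^ 2 * (s * s) := by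
        rw [hη_def, hc_def]; ring
      rw [hss] at h4; linarith
    have hec : η * c = 1 ∨ η * c = -1 := by
      rcases hXeq with h | h
      · left
        have hR : ((X:ℝ)) ^ 2 - (N:ℝ) * (m:ℝ) ^ 2 = 4 := by exact_mod_cast h
        linarith
      · right
        have hR : ((X:ℝ)) ^ 2 - (N:ℝ) * (m:ℝ) ^ 2 = -4 := by exact_mod_cast h
        linarith
    have hη_big : 5 < η := by
      have hms : (1:ℝ) * s ≤ (m:ℝ) * s := mul_le_mul_of_nonneg_right hm1R hs_nonneg
      rw [hη_def]; linarith
    have hη_pos : 0 < η := by linarith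
    have hc_bound : -1 < c ∧ c < 1 := aux_conj_bound (by linarith) hec
    set θ : ℝ := 2*(a:ℝ) + s with hθ_def
    have hθ20 : 20 < θ := by rw [hθ_def]; linarith
    have hθpos : 0 < θ := by linarith
    have hinv : (s - 2*(a:ℝ)) * θ = 1 := by rw [hθ_def]; linear_combination hss + hNr
    have hspos : 0 < s - 2*(a:ℝ) := by linarith
    by_cases hcase : η < θ
    · -- small case: m = 1, then no square fits
      have hm3 : m < 3 := by
        by_contra hm3
        push_neg at hm3
        have hm3R : (3:ℝ) ≤ (m:ℝ) := by exact_mod_cast hm3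
        have hXs : (X:ℝ) < s := by
          rw [hη_def, hθ_def] at hcase
          have h3s : 3 * s ≤ (m:ℝ) * s := mul_le_mul_of_nonneg_right hm3R hs_nonneg
          linarith
        have hX2 : (X:ℝ) ^ 2 < (N:ℝ) := aux_sq_lt (by linarith) hXs hss
        have hX2' : ((X:ℕ):ℤ) ^ 2 < (N:ℤ) := by exact_mod_cast hX2
        have hmZ : (3:ℤ) ≤ ((m:ℕ):ℤ) := by exact_mod_cast hm3
        exact aux_small_contra hX2' hNZ hmZ hXeq
      have hm_eq : m = 1 := by obtain ⟨k, hk⟩ := hm_odd; omega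
      rw [hm_eq] at hXeq
      obtain ⟨b, hb⟩ := hX_odd
      have hbZ : ((X:ℕ):ℤ) = 2*(b:ℤ)+1 := by exact_mod_cast hb
      have hb0 : (0:ℤ) ≤ (b:ℤ) := Int.ofNat_nonneg b
      rw [hbZ, hN] at hXeq
      push_cast at hXeq
      exact aux_y1_contra ha5 hb0 hXeq
    · push_neg at hcase
      have hηθ : θ < η := by
        rcases lt_or_eq_of_le hcase with h | h
        · exact h
        · exfalso
          have hcz : ((((X:ℕ):ℤ) - 4*a : ℤ) : ℝ) + ((((m:ℕ):ℤ) - 2 : ℤ) : ℝ) * s = 0 := by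
            push_cast
            rw [hθ_def, hη_def] at h
            linear_combination (-2:ℝ) * h
          obtain ⟨-, h2⟩ := coeffs_zero hirr hcz
          obtain ⟨k, hk⟩ := hm_odd
          omega
      set x' : ℤ := (N:ℤ)*((m:ℕ):ℤ) - 2*a*((X:ℕ):ℤ) with hx'_def
      set y' : ℤ := ((X:ℕ):ℤ) - 2*a*((m:ℕ):ℤ) with hy'_def
      have heq' : x' ^ 2 - (N:ℤ) * y' ^ 2 = 4 ∨ x' ^ 2 - (N:ℤ) * y' ^ 2 = -4 := by
        rcases hXeq with h | h
        · right; rw [hx'_def, hy'_def]; linear_combination (4*a^2 - (N:ℤ))*h - 4*hN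
        · left;  rw [hx'_def, hy'_def]; linear_combination (4*a^2 - (N:ℤ))*h + 4*hN
      have hNodd : Odd (N:ℤ) := by rw [hN]; exact ⟨2*a^2, by ring⟩
      have hmoddZ : Odd ((m:ℕ):ℤ) := by exact_mod_cast hm_odd
      have hXoddZ : Odd ((X:ℕ):ℤ) := by exact_mod_cast hX_odd
      have hx'_odd : Odd x' := by
        rw [hx'_def]; exact (hNodd.mul hmoddZ).sub_even ⟨a*((X:ℕ):ℤ), by ring⟩
      have hy'_odd : Odd y' := by
        rw [hy'_def]; exact hXoddZ.sub_even ⟨a*((m:ℕ):ℤ), by ring⟩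
      set η' : ℝ := η * (s - 2*(a:ℝ)) with hη'_def
      set c' : ℝ := -c * θ with hc'_def
      have hx'R : ((x':ℤ):ℝ) = η' + c' := by
        rw [hx'_def]; push_cast
        rw [hη'_def, hc'_def, hη_def, hc_def, hθ_def]
        linear_combination (-((m:ℕ):ℝ)) * hss
      have hy'R : ((y':ℤ):ℝ) * s = η' - c' := by
        rw [hy'_def]; push_cast
        rw [hη'_def, hc'_def, hη_def, hc_def, hθ_def]; ring
      have hη'1 : 1 < η' := by rw [hη'_def]; exact aux_eta'_gt hinv hηθ hspos
      have hc'_bound : -1 < c' ∧ c' < 1 := by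
        rw [hc'_def]; exact aux_c'_bound hec hθpos hηθ hη_pos
      have hx'pos : 0 < x' := by
        have h0 : (0:ℝ) < ((x':ℤ):ℝ) := by rw [hx'R]; linarith [hη'1, hc'_bound.1]
        exact_mod_cast h0
      have hs_pos : 0 < s := by linarith
      have hy'pos : 0 < y' := by
        have h1 : (0:ℝ) < ((y':ℤ):ℝ) * s := by rw [hy'R]; linarith [hη'1, hc'_bound.2]
        have h2 : (0:ℝ) < ((y':ℤ):ℝ) := aux_pos_of_mul h1 hs_pos
        exact_mod_cast h2
      have h20 : 20 * (s - 2*(a:ℝ)) < 1 := aux_h20 hinv hθ20 hspos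
      have hstep : η * (s - 2*(a:ℝ)) + 1 < η - 1 := aux_step h20 (by linarith) hspos
      have hylt : ((y':ℤ):ℝ) * s < (m:ℝ) * s := by
        have hms : (m:ℝ) * s = η - c := by rw [hη_def, hc_def]; ring
        rw [hy'R, hms, hη'_def]
        linarith [hstep, hc'_bound.1, hc_bound.2]
      have hy'm : y' < ((m:ℕ):ℤ) := by
        have h3 := lt_of_mul_lt_mul_right hylt hs_pos.le
        exact_mod_cast h3
      have hyn : ((y'.natAbs : ℤ)) = y' := Int.natAbs_of_nonneg (le_of_lt hy'pos)
      have hxn : ((x'.natAbs : ℤ)) = x' := Int.natAbs_of_nonneg (le_of_lt hx'pos)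
      have hlt : y'.natAbs < m := by omega
      exact IH y'.natAbs hlt x'.natAbs (Int.natAbs_odd.mpr hy'_odd) (Int.natAbs_odd.mpr hx'_odd)
        (by rw [hxn, hyn]; exact heq')
  refine main y.natAbs x.natAbs (Int.natAbs_odd.mpr hy) (Int.natAbs_odd.mpr hx) ?_
  have hx2 : ((x.natAbs : ℤ)) ^ 2 = x ^ 2 := by rw [Int.natAbs_sq]
  have hy2 : ((y.natAbs : ℤ)) ^ 2 = y ^ 2 := by rw [Int.natAbs_sq]
  rw [hx2, hy2]
  exact heq

/-- For `a` odd, `a > 3`, and `N = 4a² + 1` squarefree, the fundamental unit of the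
ring of integers of `ℚ(√N)` lies in `ℤ[√N]` (i.e. `e = 1`); equivalently,
`x² − Ny² = ±4` has no solution in odd integers. -/
theorem e_eq_one_of_four_sq_add_one (a : ℤ) (ha : Odd a) (ha3 : 3 < a)
    (N : ℕ) (hN : (N : ℤ) = 4 * a ^ 2 + 1) (hsf : Squarefree N)
    (ε : ℝ) (hε : IsFundamentalUnit N ε) :
    InZsqrt N ε ∧
      ¬ ∃ x y : ℤ, Odd x ∧ Odd y ∧
        (x ^ 2 - (N : ℤ) * y ^ 2 = 4 ∨ x ^ 2 - (N : ℤ) * y ^ 2 = -4) := by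
  have ha5 : 5 ≤ a := by obtain ⟨k, hk⟩ := ha; omega
  have h1N : 1 < N := by
    have h : (1:ℤ) < (N:ℤ) := by rw [hN]; nlinarith
    exact_mod_cast h
  have hnsq : ¬ IsSquare N := by
    rintro ⟨r, hr⟩
    have hu : IsUnit r := hsf r (by rw [hr])
    have hr1 : r = 1 := Nat.isUnit_iff.mp hu
    rw [hr1] at hr
    omega
  have hirr : Irrational (Real.sqrt N) := irrational_sqrt_natCast_iff.mpr hnsq
  have noodd := no_odd_solution a ha ha3 N hN hirr
  refine ⟨?_, noodd⟩
  obtain ⟨hε1, hεmax, hεinv, -⟩ := hε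
  obtain ⟨x, y, hpar, hz⟩ := hεmax
  set s : ℝ := Real.sqrt N with hs_def
  have hN0 : (0:ℝ) ≤ (N:ℝ) := by positivity
  have hss : s * s = (N:ℝ) := Real.mul_self_sqrt hN0
  rcases Int.even_or_odd x with hxe | hxo
  · -- x, y both even : ε ∈ ℤ[√N]
    have hye : Even y := by
      rcases Int.even_or_odd y with h | h
      · exact h
      · exfalso
        rw [Int.even_iff] at hxe
        rw [Int.odd_iff] at h
        omega
    obtain ⟨x1, hx1⟩ := hxe
    obtain ⟨y1, hy1⟩ := hye
    refine ⟨x1, y1, ?_⟩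
    rw [hz, hx1, hy1]
    push_cast
    ring
  · -- x, y both odd : contradiction with noodd
    exfalso
    have hyo : Odd y := by
      rcases Int.even_or_odd y with h | h
      · exfalso
        rw [Int.even_iff] at h
        rw [Int.odd_iff] at hxo
        omega
      · exact h
    obtain ⟨u, v, hpuv, hzv⟩ := hεinv
    have hεne : ε ≠ 0 := by intro h; rw [h] at hε1; norm_num at hε1
    have hmul : ε * ε⁻¹ = 1 := mul_inv_cancel₀ hεne
    rw [hzv, hz] at hmul
    have hcz : ((x*u + (N:ℤ)*y*v - 4 : ℤ):ℝ) + ((x*v + y*u : ℤ):ℝ) * s = 0 := by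
      push_cast
      linear_combination (4:ℝ) * hmul - (y:ℝ)*(v:ℝ) * hss
    obtain ⟨h1, h2⟩ := coeffs_zero hirr hcz
    have h1' : x*u + (N:ℤ)*y*v - 4 = 0 := h1
    have h2' : x*v + y*u = 0 := h2
    have hDD : (x^2 - (N:ℤ)*y^2) * (u^2 - (N:ℤ)*v^2) = 16 := by
      linear_combination (x*u + (N:ℤ)*y*v + 4) * h1' - (N:ℤ)*(x*v + y*u) * h2'
    obtain ⟨p, hp⟩ := sq_odd_int x hxo
    obtain ⟨q, hq⟩ := sq_odd_int y hyo
    obtain ⟨r, hr⟩ := sq_odd_int a ha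
    obtain ⟨S, hS⟩ : ∃ S, (N:ℤ) * y^2 = 8*S + 5 :=
      ⟨32*r*q + 4*r + 5*q, by rw [hN, hr, hq]; ring⟩
    obtain ⟨D, hD⟩ : ∃ D : ℤ, x^2 - (N:ℤ)*y^2 = D := ⟨_, rfl⟩
    obtain ⟨W, hW⟩ : ∃ W : ℤ, u^2 - (N:ℤ)*v^2 = W := ⟨_, rfl⟩
    rw [hD, hW] at hDD
    have ht : D = 8*(p - S - 1) + 4 := by rw [← hD]; linarith
    have hdvd : D ∣ 16 := ⟨W, hDD.symm⟩
    have hle : D ≤ 16 := Int.le_of_dvd (by norm_num) hdvd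
    have hge : -(16:ℤ) ≤ D := by
      have h' : -D ∣ 16 := (neg_dvd).mpr hdvd
      have := Int.le_of_dvd (by norm_num) h'
      linarith
    have hD4 : D = 4 ∨ D = -4 := by
      rcases (by omega : D = -12 ∨ D = -4 ∨ D = 4 ∨ D = 12) with h | h | h | h
      · exfalso; rw [h] at hDD; omega
      · right; exact h
      · left; exact h
      · exfalso; rw [h] at hDD; omega
    refine noodd ⟨x, y, hxo, hyo, ?_⟩
    rcases hD4 with h | h
    · left; rw [hD]; exact h
    · right; rw [hD]; exact h
end

section
/- For every odd integer a > 3 such that N = a² − 4 is square-free, the fundamental unit ε of the ring of integers of ℚ(√N) does not lie in ℤ[√N] (i.e., e = 3); equivalently, x² − N y² = ±4 has a solution in odd integers (namely x = a, y = 1). -/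
lemma lin_indep_aux {N : ℕ} (hirr : Irrational (Real.sqrt N)) (x y : ℤ)
    (h : (x : ℝ) + y * Real.sqrt N = 0) : x = 0 ∧ y = 0 := by
  by_cases hy : y = 0
  · subst hy
    simp at h
    exact ⟨mod_cast h, rfl⟩
  · exfalso
    apply hirr
    refine ⟨(-x / y : ℚ), ?_⟩
    have hy' : (y : ℝ) ≠ 0 := Int.cast_ne_zero.mpr hy
    push_cast
    field_simp
    linarith

/-- For `a` odd, `a > 3`, and `N = a² − 4` squarefree, the pair `(x, y) = (a, 1)` is
an odd solution of `x² − Ny² = 4`, and consequently the fundamental unit of the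
ring of integers of `ℚ(√N)` does not lie in `ℤ[√N]` (i.e. `e = 3`). -/
theorem e_eq_three_of_sq_sub_four (a : ℤ) (ha : Odd a) (ha3 : 3 < a)
    (N : ℕ) (hN : (N : ℤ) = a ^ 2 - 4) (hsf : Squarefree N)
    (ε : ℝ) (hε : IsFundamentalUnit N ε) :
    a ^ 2 - (N : ℤ) * 1 ^ 2 = 4 ∧ ¬ InZsqrt N ε := by
  obtain ⟨k, hk⟩ := ha
  have ha5 : 5 ≤ a := by omega
  have hN21 : (21 : ℤ) ≤ (N : ℤ) := by nlinarith
  have hN1 : 1 < N := by omega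
  set s := Real.sqrt N with hs
  have hirr : Irrational s := by
    rw [hs, irrational_sqrt_natCast_iff]
    rintro ⟨r, hr⟩
    have hu : IsUnit r := hsf r (by rw [hr])
    have hr1 : r = 1 := Nat.isUnit_iff.mp hu
    rw [hr1] at hr
    omega
  have hs0 : 0 ≤ s := Real.sqrt_nonneg _
  have hspos : 0 < s := Real.sqrt_pos.mpr (by positivity)
  have hssq : s ^ 2 = (N : ℝ) := Real.sq_sqrt (by positivity)
  have hNa : ((N : ℕ) : ℝ) = (a : ℝ) ^ 2 - 4 := by exact_mod_cast hN
  have haR : (5 : ℝ) ≤ (a : ℝ) := by exact_mod_cast ha5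
  have hsa : s < (a : ℝ) := by nlinarith
  have hs_gt : (a : ℝ) - 2 < s := by nlinarith
  obtain ⟨hε1, hεM, hεiM, hmin⟩ := hε
  -- η = (a + √N)/2 is a unit of the maximal order greater than 1
  have hηmul : (((a : ℝ) + s) / 2) * (((a : ℝ) + (-1 : ℤ) * s) / 2) = 1 := by
    push_cast
    nlinarith
  have hη1 : (1 : ℝ) < ((a : ℝ) + s) / 2 := by linarith
  have hηinv : (((a : ℝ) + s) / 2)⁻¹ = ((a : ℝ) + (-1 : ℤ) * s) / 2 :=
    (eq_inv_of_mul_eq_one_left (by linarith [hηmul] : (((a : ℝ) + (-1 : ℤ) * s) / 2) * (((a : ℝ) + s) / 2) = 1)).symm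
  have hle : ε ≤ ((a : ℝ) + s) / 2 := by
    refine hmin _ hη1 ⟨a, 1, by omega, by push_cast; ring⟩ ⟨a, -1, by omega, by rw [hηinv]⟩
  constructor
  · rw [hN]; ring
  · rintro ⟨p, q, hpq⟩
    obtain ⟨u, v, huv, hinv⟩ := hεiM
    have hε0 : ε ≠ 0 := by linarith
    have hprod : ((p : ℝ) + q * s) * (((u : ℝ) + v * s) / 2) = 1 := by
      rw [← hpq, ← hinv]; exact mul_inv_cancel₀ hε0
    have hexp : ((p * u + q * v * N - 2 : ℤ) : ℝ) + ((p * v + q * u : ℤ) : ℝ) * s = 0 := by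
      push_cast
      linear_combination 2 * hprod - (q : ℝ) * (v : ℝ) * hssq
    obtain ⟨h1, h2⟩ := lin_indep_aux hirr _ _ hexp
    have h1' : (p : ℝ) * u + q * v * N = 2 := by exact_mod_cast (by omega : ((p * u + q * v * N : ℤ) : ℤ) = 2)
    have h2' : (p : ℝ) * v + q * u = 0 := by exact_mod_cast h2
    have hconj : ((p : ℝ) - q * s) * (((u : ℝ) - v * s) / 2) = 1 := by
      linear_combination (1 / 2 : ℝ) * h1' - (s / 2) * h2' + ((q : ℝ) * v / 2) * hssq
    have hreal : (((p ^ 2 - N * q ^ 2) * (u ^ 2 - N * v ^ 2) : ℤ) : ℝ) = 4 := by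
      push_cast
      rw [← hssq]
      have hA : ((p : ℝ) + q * s) * ((u : ℝ) + v * s) = 2 := by linear_combination 2 * hprod
      have hB : ((p : ℝ) - q * s) * ((u : ℝ) - v * s) = 2 := by linear_combination 2 * hconj
      linear_combination ((p : ℝ) - q * s) * ((u : ℝ) - v * s) * hA + 2 * hB
    have hZ : ((p ^ 2 - N * q ^ 2) * (u ^ 2 - N * v ^ 2) : ℤ) = 4 := by exact_mod_cast hreal
    -- parity: 4 ∣ u² - N v²
    obtain ⟨t, ht⟩ : ∃ t, u = v + 2 * t := ⟨(u - v) / 2, by omega⟩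
    have h4 : u ^ 2 - (N : ℤ) * v ^ 2 = 4 * ((1 - k ^ 2 - k) * v ^ 2 + t * v + t ^ 2) := by
      rw [ht, hN, hk]; ring
    have hDm : (p ^ 2 - (N : ℤ) * q ^ 2) * ((1 - k ^ 2 - k) * v ^ 2 + t * v + t ^ 2) = 1 := by
      apply mul_left_cancel₀ (by norm_num : (4 : ℤ) ≠ 0)
      rw [mul_one]
      linear_combination hZ - (p ^ 2 - (N : ℤ) * q ^ 2) * h4
    have hD : p ^ 2 - (N : ℤ) * q ^ 2 = 1 ∨ p ^ 2 - (N : ℤ) * q ^ 2 = -1 :=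
      Int.isUnit_iff.mp (IsUnit.of_mul_eq_one _ hDm)
    -- σ = p - q√N satisfies ε σ = ±1, hence |σ| < 1
    have hεσ : ε * ((p : ℝ) - q * s) = ((p ^ 2 - N * q ^ 2 : ℤ) : ℝ) := by
      rw [hpq]; push_cast
      linear_combination (-(q : ℝ) ^ 2) * hssq
    have hinv1 : 0 < ε⁻¹ := by positivity
    have hinv2 : ε⁻¹ < 1 := by
      rw [inv_lt_one_iff₀]; right; exact hε1
    have hσlt : |(p : ℝ) - q * s| < 1 := by
      rcases hD with hD | hD <;> rw [hD] at hεσ <;> push_cast at hεσ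
      · have : (p : ℝ) - q * s = ε⁻¹ := by
          field_simp
          linarith [hεσ]
        rw [this, abs_of_pos hinv1]; exact hinv2
      · have : (p : ℝ) - q * s = -ε⁻¹ := by
          field_simp
          linarith [hεσ]
        rw [this, abs_neg, abs_of_pos hinv1]; exact hinv2
    have hσ1 : (p : ℝ) - q * s < 1 := lt_of_le_of_lt (le_abs_self _) hσlt
    have hσ2 : -1 < (p : ℝ) - q * s := by
      have := neg_abs_le ((p : ℝ) - q * s); linarith
    -- p ≥ 1 and q ≥ 1
    have hp1 : (1 : ℝ) ≤ (p : ℝ) := by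
      have h2p : (0 : ℝ) < 2 * p := by rw [hpq] at hε1; linarith
      have hp0 : (0 : ℤ) < p := by exact_mod_cast (by linarith : (0 : ℝ) < (p : ℝ))
      have : (1 : ℤ) ≤ p := by omega
      exact_mod_cast this
    have hq1 : (1 : ℝ) ≤ (q : ℝ) := by
      have hqs : (0 : ℝ) < 2 * ((q : ℝ) * s) := by rw [hpq] at hε1; linarith
      have hq0R : (0 : ℝ) < (q : ℝ) := by
        by_contra hcon
        push_neg at hcon
        have := mul_nonpos_of_nonpos_of_nonneg hcon hs0
        linarith
      have hq0 : (0 : ℤ) < q := by exact_mod_cast hq0R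
      have : (1 : ℤ) ≤ q := by omega
      exact_mod_cast this
    have hqs : s ≤ (q : ℝ) * s := le_mul_of_one_le_left (le_of_lt hspos) hq1
    rw [hpq] at hle
    linarith
end
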